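/- arXiv:0709.4332 — 2 statements merged into one kernel-verified Lean document; each statement's English description precedes it below -/
import Mathlib

section
/- Let ε > 0, set a = ε/√2, and define φ₀ on (0,1] by φ₀(t) = (k−1)·a for t ∈ (2^{−(k+1)}, 2^{−k}], k = 0, 1, 2, …. Then φ₀ ∈ BMO^d_ε([0,1]) and the supremum of ⟨φ₀²⟩_J − (⟨φ₀⟩_J)² over all dyadic subintervals J of [0,1] equals ε²; moreover ∫₀¹ φ₀ = 0, ∫₀¹ φ₀² = ε², and: if ε < √2·log 2 then ∫₀¹ e^{φ₀(t)} dt = e^{−ε/√2}/(2 − e^{ε/√2}), while if ε ≥ √2·log 2 then e^{φ₀} is not integrable on (0,1]. -/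
open MeasureTheory Real

/-- The average of `φ` over the interval with endpoints `a`, `b`. -/
noncomputable def avg (φ : ℝ → ℝ) (a b : ℝ) : ℝ := (∫ t in a..b, φ t) / (b - a)

/-- `φ ∈ BMO_ε([a,b])`: `φ` and `φ²` are integrable on `[a,b]` and the mean
oscillation `⟨φ²⟩_J − ⟨φ⟩_J²` is at most `ε²` on every nondegenerate
subinterval `J = [c,d] ⊆ [a,b]`. -/
def BMOe (ε a b : ℝ) (φ : ℝ → ℝ) : Prop :=
  IntervalIntegrable φ volume a b ∧
  IntervalIntegrable (fun t => (φ t) ^ 2) volume a b ∧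
  ∀ c d : ℝ, a ≤ c → c < d → d ≤ b →
    avg (fun t => (φ t) ^ 2) c d - (avg φ c d) ^ 2 ≤ ε ^ 2
/-- `φ ∈ BMO^d_ε([0,1])`: `φ` and `φ²` are integrable on `[0,1]` and the mean
oscillation is at most `ε²` on every dyadic subinterval
`[k/2^n, (k+1)/2^n]` of `[0,1]`. -/
def BMOd (ε : ℝ) (φ : ℝ → ℝ) : Prop :=
  IntervalIntegrable φ volume 0 1 ∧
  IntervalIntegrable (fun t => (φ t) ^ 2) volume 0 1 ∧
  ∀ n k : ℕ, k < 2 ^ n →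
    avg (fun t => (φ t) ^ 2) ((k : ℝ) / 2 ^ n) (((k : ℝ) + 1) / 2 ^ n)
      - (avg φ ((k : ℝ) / 2 ^ n) (((k : ℝ) + 1) / 2 ^ n)) ^ 2 ≤ ε ^ 2

/-!
On each band `(2^{-(k+1)}, 2^{-k}]` the function `φ₀` is the constant `(k-1)a`, so every integral
of `g ∘ φ₀` over `(0,1]` is the series `∑ g((k-1)a) 2^{-(k+1)}`: this gives `∫ φ₀ = 0`,
`∫ φ₀² = 2a² = ε²`, and for `e^{φ₀}` a geometric series of ratio `e^a/2`, which converges iff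
`a < log 2`. A dyadic interval `[k 2^{-n}, (k+1) 2^{-n}]` with `k ≥ 1` lies in a single band,
so the oscillation there is `0`. For `k = 0`, `φ₀(2^{-n} s) = φ₀(s) + n a`, and the mean
oscillation is invariant under rescaling and under adding constants, so over `[0, 2^{-n}]` it
equals the one over `[0,1]`, namely `ε²`.
-/

open Set

def geomBand (r : ℝ) (k : ℕ) : Set ℝ := Ioc (r ^ (k + 1)) (r ^ k)

section GeomBand

variable {r : ℝ}

lemma measurableSet_geomBand (k : ℕ) : MeasurableSet (geomBand r k) := measurableSet_Ioc

lemma pairwise_disjoint_geomBand (hr0 : 0 ≤ r) (hr1 : r ≤ 1) :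
    Pairwise (Function.onFun Disjoint (geomBand r)) := by
  intro i j hij
  wlog h : i < j generalizing i j
  · exact (this hij.symm (by omega)).symm
  refine Ioc_disjoint_Ioc.2 (le_max_of_le_left (min_le_right _ _ |>.trans ?_))
  exact pow_le_pow_of_le_one hr0 hr1 h

lemma iUnion_geomBand (hr0 : 0 < r) (hr1 : r < 1) : ⋃ k, geomBand r k = Ioc 0 1 := by
  ext t
  simp only [geomBand, mem_iUnion, mem_Ioc]
  constructor
  · rintro ⟨k, hk, hk'⟩
    exact ⟨(pow_pos hr0 _).trans hk, hk'.trans (pow_le_one₀ hr0.le hr1.le)⟩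
  · rintro ⟨ht0, ht1⟩
    classical
    have hex : ∃ k, r ^ (k + 1) < t := (exists_pow_lt_of_lt_one ht0 hr1).imp fun k hk =>
      (pow_le_pow_of_le_one hr0.le hr1.le k.le_succ).trans_lt hk
    refine ⟨Nat.find hex, Nat.find_spec hex, ?_⟩
    cases h : Nat.find hex with
    | zero => simpa using ht1
    | succ m => simpa using Nat.find_min hex (m := m) (by omega)

lemma pow_mul_mem_geomBand (hr0 : 0 < r) {t : ℝ} {k : ℕ} (ht : t ∈ geomBand r k) (n : ℕ) :
    r ^ n * t ∈ geomBand r (k + n) := by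
  obtain ⟨h1, h2⟩ := ht
  have hn := pow_pos hr0 n
  constructor
  · rw [show k + n + 1 = n + (k + 1) by ring, pow_add]; gcongr
  · rw [add_comm, pow_add]; gcongr

lemma integral_geomBand_of_eqOn (hr0 : 0 ≤ r) (hr1 : r ≤ 1) {f : ℝ → ℝ} {c : ℝ} {k : ℕ}
    (hf : EqOn f (fun _ => c) (geomBand r k)) :
    ∫ t in geomBand r k, f t = c * (r ^ k * (1 - r)) := by
  have hle : r ^ (k + 1) ≤ r ^ k := pow_le_pow_of_le_one hr0 hr1 k.le_succ
  rw [setIntegral_congr_fun (measurableSet_geomBand k) hf, setIntegral_const, smul_eq_mul,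
    measureReal_def, geomBand, Real.volume_Ioc, ENNReal.toReal_ofReal (sub_nonneg.2 hle)]
  ring

variable {f : ℝ → ℝ} {c : ℕ → ℝ}

lemma hasSum_integral_of_eqOn_geomBand (hr0 : 0 < r) (hr1 : r < 1)
    (hf : ∀ k, EqOn f (fun _ => c k) (geomBand r k)) (hint : IntervalIntegrable f volume 0 1) :
    HasSum (fun k => c k * (r ^ k * (1 - r))) (∫ t in (0)..1, f t) := by
  rw [intervalIntegrable_iff_integrableOn_Ioc_of_le zero_le_one, ← iUnion_geomBand hr0 hr1]
    at hint
  rw [intervalIntegral.integral_of_le zero_le_one, ← iUnion_geomBand hr0 hr1]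
  simpa only [integral_geomBand_of_eqOn hr0.le hr1.le (hf _)] using
    hasSum_integral_iUnion measurableSet_geomBand
      (pairwise_disjoint_geomBand hr0.le hr1.le) hint

lemma intervalIntegrable_of_eqOn_geomBand (hr0 : 0 < r) (hr1 : r < 1)
    (hf : ∀ k, EqOn f (fun _ => c k) (geomBand r k))
    (hc : Summable fun k => c k * (r ^ k * (1 - r))) : IntervalIntegrable f volume 0 1 := by
  rw [intervalIntegrable_iff_integrableOn_Ioc_of_le zero_le_one, ← iUnion_geomBand hr0 hr1]
  refine integrableOn_iUnion_of_summable_integral_norm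
    (fun k => (integrableOn_const measure_Ioc_lt_top.ne).congr_fun (hf k).symm
      (measurableSet_geomBand k)) ?_
  have hnorm : ∀ k, EqOn (fun t => ‖f t‖) (fun _ => |c k|) (geomBand r k) := fun k t ht => by
    simp [hf k ht]
  simp only [integral_geomBand_of_eqOn hr0.le hr1.le (hnorm _)]
  refine hc.abs.congr fun k => ?_
  rw [abs_mul, abs_of_nonneg (mul_nonneg (pow_pos hr0 k).le (sub_nonneg.2 hr1.le))]

end GeomBand

noncomputable def meanOsc (φ : ℝ → ℝ) (c d : ℝ) : ℝ := avg (fun t => φ t ^ 2) c d - avg φ c d ^ 2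

section Avg

variable {f g : ℝ → ℝ} {a b : ℝ}

lemma avg_comp_mul_left (f : ℝ → ℝ) {c : ℝ} (hc : c ≠ 0) (a b : ℝ) :
    avg (fun s => f (c * s)) a b = avg f (c * a) (c * b) := by
  rw [avg, avg, intervalIntegral.integral_comp_mul_left f hc, smul_eq_mul, ← mul_sub]
  field_simp

lemma meanOsc_comp_mul_left (f : ℝ → ℝ) {c : ℝ} (hc : c ≠ 0) (a b : ℝ) :
    meanOsc (fun s => f (c * s)) a b = meanOsc f (c * a) (c * b) := by
  rw [meanOsc, meanOsc, avg_comp_mul_left f hc, avg_comp_mul_left (fun t => f t ^ 2) hc]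

lemma avg_congr (hab : a ≤ b) (h : EqOn f g (Ioc a b)) : avg f a b = avg g a b := by
  rw [avg, avg,
    intervalIntegral.integral_congr_ae (ae_of_all _ fun t ht => h (uIoc_of_le hab ▸ ht))]

lemma meanOsc_congr (hab : a ≤ b) (h : EqOn f g (Ioc a b)) : meanOsc f a b = meanOsc g a b := by
  rw [meanOsc, meanOsc, avg_congr hab h,
    avg_congr (g := fun t => g t ^ 2) hab fun t ht => by rw [h ht]]

lemma avg_const (hab : a ≠ b) (v : ℝ) : avg (fun _ => v) a b = v := by
  rw [avg, intervalIntegral.integral_const, smul_eq_mul,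
    mul_div_cancel_left₀ _ (sub_ne_zero.2 hab.symm)]

lemma meanOsc_eq_zero_of_eqOn (hab : a < b) {v : ℝ} (h : EqOn f (fun _ => v) (Ioc a b)) :
    meanOsc f a b = 0 := by
  rw [meanOsc_congr hab.le h, meanOsc, avg_const hab.ne, avg_const hab.ne, sub_self]

lemma meanOsc_add_const (hf : IntervalIntegrable f volume a b)
    (hf2 : IntervalIntegrable (fun t => f t ^ 2) volume a b) (v : ℝ) :
    meanOsc (fun t => f t + v) a b = meanOsc f a b := by
  have hsq : ∫ t in a..b, (f t + v) ^ 2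
      = (∫ t in a..b, f t ^ 2) + 2 * v * (∫ t in a..b, f t) + (b - a) * v ^ 2 := by
    simp_rw [add_sq]
    rw [intervalIntegral.integral_add (hf2.add ((hf.const_mul 2).mul_const v))
        intervalIntegrable_const,
      intervalIntegral.integral_add hf2 ((hf.const_mul 2).mul_const v),
      intervalIntegral.integral_mul_const, intervalIntegral.integral_const_mul,
      intervalIntegral.integral_const, smul_eq_mul]
    ring
  rcases eq_or_ne a b with rfl | hab
  · simp only [meanOsc, avg, sub_self, div_zero]
  have hba : b - a ≠ 0 := sub_ne_zero.2 hab.symm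
  simp only [meanOsc, avg, hsq, intervalIntegral.integral_add hf intervalIntegrable_const,
    intervalIntegral.integral_const, smul_eq_mul]
  field_simp
  ring

end Avg

lemma geomBand_half (k : ℕ) :
    geomBand (1 / 2) k = Ioc ((2 : ℝ) ^ (-(k : ℤ) - 1)) ((2 : ℝ) ^ (-(k : ℤ))) := by
  rw [geomBand, show -(k : ℤ) - 1 = -((k + 1 : ℕ) : ℤ) by push_cast; ring]
  simp only [zpow_neg, zpow_natCast, one_div, inv_pow]

lemma exists_dyadic_Ioc_subset_geomBand_half {n k : ℕ} (hk0 : 0 < k) (hkn : k < 2 ^ n) :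
    ∃ m, Ioc ((k : ℝ) / 2 ^ n) (((k : ℝ) + 1) / 2 ^ n) ⊆ geomBand (1 / 2) m := by
  set L := Nat.log 2 k
  have hL : 2 ^ L ≤ k := Nat.pow_log_le_self 2 hk0.ne'
  have hL' : k < 2 ^ (L + 1) := Nat.lt_pow_succ_log_self one_lt_two k
  obtain ⟨m, rfl⟩ : ∃ m, n = m + (L + 1) :=
    Nat.exists_eq_add_of_le' ((Nat.pow_lt_pow_iff_right one_lt_two).1 (hL.trans_lt hkn))
  have hlow : ((1 : ℝ) / 2) ^ (m + 1) * 2 ^ (m + (L + 1)) = 2 ^ L := by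
    rw [show m + (L + 1) = m + 1 + L by ring, pow_add (2 : ℝ) (m + 1) L, ← mul_assoc, ← mul_pow]
    norm_num
  have hhigh : ((1 : ℝ) / 2) ^ m * 2 ^ (m + (L + 1)) = 2 ^ (L + 1) := by
    rw [pow_add (2 : ℝ) m, ← mul_assoc, ← mul_pow]
    norm_num
  refine ⟨m, Ioc_subset_Ioc ?_ ?_⟩
  · rw [le_div_iff₀ (by positivity), hlow]
    exact_mod_cast hL
  · rw [div_le_iff₀ (by positivity), hhigh]
    exact_mod_cast (hL' : k + 1 ≤ 2 ^ (L + 1))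

lemma hasSum_sub_one_mul_mul_half_pow (a : ℝ) :
    HasSum (fun k : ℕ => ((k : ℝ) - 1) * a * ((1 / 2) ^ k * (1 - 1 / 2))) 0 := by
  have h1 := hasSum_coe_mul_geometric_of_norm_lt_one (𝕜 := ℝ) (r := 1 / 2) (by norm_num)
  have h := ((h1.sub hasSum_geometric_two).mul_right (a / 2)).congr_fun
    (g := fun k : ℕ => ((k : ℝ) - 1) * a * ((1 / 2) ^ k * (1 - 1 / 2))) fun k => by ring
  rwa [show (1 / 2 / (1 - 1 / 2) ^ 2 - 2) * (a / 2) = 0 by norm_num] at h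

lemma hasSum_sub_one_mul_sq_mul_half_pow (a : ℝ) :
    HasSum (fun k : ℕ => (((k : ℝ) - 1) * a) ^ 2 * ((1 / 2) ^ k * (1 - 1 / 2))) (2 * a ^ 2) := by
  have h1 := hasSum_coe_mul_geometric_of_norm_lt_one (𝕜 := ℝ) (r := 1 / 2) (by norm_num)
  have h2 := hasSum_choose_mul_geometric_of_norm_lt_one (𝕜 := ℝ) 2 (r := 1 / 2) (by norm_num)
  -- `(k - 1)² = 2 (k+2 choose 2) - 5k - 1`
  have h := (((h2.mul_left 2).sub (h1.mul_left 5)).sub hasSum_geometric_two).mul_right (a ^ 2 / 2)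
    |>.congr_fun (g := fun k : ℕ => (((k : ℝ) - 1) * a) ^ 2 * ((1 / 2) ^ k * (1 - 1 / 2)))
      fun k => by rw [Nat.cast_choose_two]; push_cast; ring
  rwa [show (2 * (1 / (1 - 1 / 2) ^ (2 + 1)) - 5 * (1 / 2 / (1 - 1 / 2) ^ 2) - 2) * (a ^ 2 / 2)
    = 2 * a ^ 2 by norm_num; ring] at h

lemma exp_sub_one_mul_mul_half_pow (a : ℝ) (k : ℕ) :
    exp (((k : ℝ) - 1) * a) * ((1 / 2) ^ k * (1 - 1 / 2)) = exp (-a) / 2 * (exp a / 2) ^ k := by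
  rw [sub_mul, one_mul, sub_eq_neg_add, exp_add, exp_nat_mul]
  ring

lemma summable_exp_sub_one_mul_mul_half_pow_iff {a : ℝ} :
    Summable (fun k : ℕ => exp (((k : ℝ) - 1) * a) * ((1 / 2) ^ k * (1 - 1 / 2))) ↔
      a < log 2 := by
  simp_rw [exp_sub_one_mul_mul_half_pow]
  rw [summable_mul_left_iff (by positivity), summable_geometric_iff_norm_lt_one, norm_div,
    norm_of_nonneg (exp_pos a).le, RCLike.norm_ofNat, div_lt_one two_pos, lt_log_iff_exp_lt two_pos]

lemma hasSum_exp_sub_one_mul_mul_half_pow {a : ℝ} (ha : a < log 2) :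
    HasSum (fun k : ℕ => exp (((k : ℝ) - 1) * a) * ((1 / 2) ^ k * (1 - 1 / 2)))
      (exp (-a) / (2 - exp a)) := by
  have hexp : exp a < 2 := (lt_log_iff_exp_lt two_pos).1 ha
  have hexp2 : 2 - exp a ≠ 0 := by linarith
  simp_rw [exp_sub_one_mul_mul_half_pow]
  have h := (hasSum_geometric_of_lt_one (by positivity) (by linarith : exp a / 2 < 1)).mul_left
    (exp (-a) / 2)
  rwa [show exp (-a) / 2 * (1 - exp a / 2)⁻¹ = exp (-a) / (2 - exp a) by field_simp] at h

def IsDyadicExtremal (a : ℝ) (φ : ℝ → ℝ) : Prop :=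
  ∀ k : ℕ, EqOn φ (fun _ => ((k : ℝ) - 1) * a) (geomBand (1 / 2) k)

namespace IsDyadicExtremal

variable {a : ℝ} {φ : ℝ → ℝ}

lemma hasSum_integral_comp (hφ : IsDyadicExtremal a φ) (g : ℝ → ℝ)
    (hint : IntervalIntegrable (fun t => g (φ t)) volume 0 1) :
    HasSum (fun k : ℕ => g (((k : ℝ) - 1) * a) * ((1 / 2) ^ k * (1 - 1 / 2)))
      (∫ t in (0)..1, g (φ t)) :=
  hasSum_integral_of_eqOn_geomBand (by norm_num) (by norm_num) (fun k => (hφ k).comp_left) hint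

lemma intervalIntegrable_comp (hφ : IsDyadicExtremal a φ) {g : ℝ → ℝ}
    (hg : Summable fun k : ℕ => g (((k : ℝ) - 1) * a) * ((1 / 2) ^ k * (1 - 1 / 2))) :
    IntervalIntegrable (fun t => g (φ t)) volume 0 1 :=
  intervalIntegrable_of_eqOn_geomBand (by norm_num) (by norm_num) (fun k => (hφ k).comp_left) hg

lemma intervalIntegrable (hφ : IsDyadicExtremal a φ) : IntervalIntegrable φ volume 0 1 :=
  hφ.intervalIntegrable_comp (g := id) (hasSum_sub_one_mul_mul_half_pow a).summable

lemma intervalIntegrable_sq (hφ : IsDyadicExtremal a φ) :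
    IntervalIntegrable (fun t => φ t ^ 2) volume 0 1 :=
  hφ.intervalIntegrable_comp (g := fun x => x ^ 2) (hasSum_sub_one_mul_sq_mul_half_pow a).summable

lemma integral_eq_zero (hφ : IsDyadicExtremal a φ) : ∫ t in (0)..1, φ t = 0 :=
  (hφ.hasSum_integral_comp id hφ.intervalIntegrable).unique (hasSum_sub_one_mul_mul_half_pow a)

lemma integral_sq (hφ : IsDyadicExtremal a φ) : ∫ t in (0)..1, φ t ^ 2 = 2 * a ^ 2 :=
  (hφ.hasSum_integral_comp (fun x => x ^ 2) hφ.intervalIntegrable_sq).unique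
    (hasSum_sub_one_mul_sq_mul_half_pow a)

lemma intervalIntegrable_exp_iff (hφ : IsDyadicExtremal a φ) :
    IntervalIntegrable (fun t => exp (φ t)) volume 0 1 ↔ a < log 2 :=
  ⟨fun h => summable_exp_sub_one_mul_mul_half_pow_iff.1 (hφ.hasSum_integral_comp exp h).summable,
    fun h => hφ.intervalIntegrable_comp (summable_exp_sub_one_mul_mul_half_pow_iff.2 h)⟩

lemma integral_exp (hφ : IsDyadicExtremal a φ) (ha : a < log 2) :
    ∫ t in (0)..1, exp (φ t) = exp (-a) / (2 - exp a) :=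
  (hφ.hasSum_integral_comp exp (hφ.intervalIntegrable_exp_iff.2 ha)).unique
    (hasSum_exp_sub_one_mul_mul_half_pow ha)

lemma apply_half_pow_mul (hφ : IsDyadicExtremal a φ) {s : ℝ} (hs : s ∈ Ioc 0 1) (n : ℕ) :
    φ ((1 / 2) ^ n * s) = φ s + n * a := by
  rw [← iUnion_geomBand (r := 1 / 2) (by norm_num) (by norm_num), mem_iUnion] at hs
  obtain ⟨k, hk⟩ := hs
  rw [hφ (k + n) (pow_mul_mem_geomBand (by norm_num) hk n), hφ k hk]
  push_cast
  ring

lemma meanOsc_zero_one (hφ : IsDyadicExtremal a φ) : meanOsc φ 0 1 = 2 * a ^ 2 := by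
  simp only [meanOsc, avg, sub_zero, div_one, hφ.integral_sq, hφ.integral_eq_zero]
  ring

lemma meanOsc_zero_half_pow (hφ : IsDyadicExtremal a φ) (n : ℕ) :
    meanOsc φ 0 ((1 / 2) ^ n) = 2 * a ^ 2 := by
  have h := meanOsc_comp_mul_left φ (c := (1 / 2) ^ n) (by positivity) 0 1
  rw [mul_zero, mul_one] at h
  rw [← h, meanOsc_congr zero_le_one fun s hs => hφ.apply_half_pow_mul hs n,
    meanOsc_add_const hφ.intervalIntegrable hφ.intervalIntegrable_sq, hφ.meanOsc_zero_one]

lemma meanOsc_dyadic_le (hφ : IsDyadicExtremal a φ) {n k : ℕ} (hk : k < 2 ^ n) :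
    meanOsc φ ((k : ℝ) / 2 ^ n) (((k : ℝ) + 1) / 2 ^ n) ≤ 2 * a ^ 2 := by
  rcases k.eq_zero_or_pos with rfl | hk0
  · rw [Nat.cast_zero, zero_div, zero_add, ← one_div_pow]
    exact (hφ.meanOsc_zero_half_pow n).le
  · obtain ⟨m, hm⟩ := exists_dyadic_Ioc_subset_geomBand_half hk0 hk
    rw [meanOsc_eq_zero_of_eqOn (by gcongr; linarith) ((hφ m).mono hm)]
    positivity

end IsDyadicExtremal

theorem stmt4_general (ε : ℝ) (a : ℝ) (ha : a = ε / Real.sqrt 2)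
    (φ₀ : ℝ → ℝ)
    (hφ₀ : ∀ k : ℕ, ∀ t ∈ Set.Ioc ((2:ℝ) ^ (-(k:ℤ) - 1)) ((2:ℝ) ^ (-(k:ℤ))),
      φ₀ t = ((k : ℝ) - 1) * a) :
    BMOd ε φ₀ ∧
    IsLUB {v : ℝ | ∃ n k : ℕ, k < 2 ^ n ∧
        v = avg (fun t => (φ₀ t) ^ 2) ((k : ℝ) / 2 ^ n) (((k : ℝ) + 1) / 2 ^ n)
            - (avg φ₀ ((k : ℝ) / 2 ^ n) (((k : ℝ) + 1) / 2 ^ n)) ^ 2} (ε ^ 2) ∧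
    (∫ t in (0:ℝ)..1, φ₀ t) = 0 ∧
    (∫ t in (0:ℝ)..1, (φ₀ t) ^ 2) = ε ^ 2 ∧
    (ε < Real.sqrt 2 * Real.log 2 →
      IntervalIntegrable (fun t => Real.exp (φ₀ t)) volume 0 1 ∧
      (∫ t in (0:ℝ)..1, Real.exp (φ₀ t)) =
        Real.exp (-ε / Real.sqrt 2) / (2 - Real.exp (ε / Real.sqrt 2))) ∧
    (Real.sqrt 2 * Real.log 2 ≤ ε →
      ¬ IntervalIntegrable (fun t => Real.exp (φ₀ t)) volume 0 1) := by
  have hφ : IsDyadicExtremal a φ₀ := fun k t ht => hφ₀ k t (geomBand_half k ▸ ht)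
  have hε : 2 * a ^ 2 = ε ^ 2 := by rw [ha, div_pow, sq_sqrt zero_le_two]; field_simp
  have hlog : a < log 2 ↔ ε < √2 * log 2 := by rw [ha, div_lt_iff₀' (by positivity)]
  have hosc : ∀ n k : ℕ, k < 2 ^ n → meanOsc φ₀ ((k : ℝ) / 2 ^ n) (((k : ℝ) + 1) / 2 ^ n) ≤ ε ^ 2 :=
    fun n k hk => hε ▸ hφ.meanOsc_dyadic_le hk
  refine ⟨⟨hφ.intervalIntegrable, hφ.intervalIntegrable_sq, hosc⟩,
    ⟨fun v ⟨n, k, hk, hv⟩ => hv ▸ hosc n k hk, fun b hb => hb ⟨0, 0, by norm_num, ?_⟩⟩,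
    hφ.integral_eq_zero, hε ▸ hφ.integral_sq, fun h => ?_, fun h => ?_⟩
  · simpa [← hε, meanOsc] using hφ.meanOsc_zero_one.symm
  · rw [neg_div, ← ha]
    exact ⟨hφ.intervalIntegrable_exp_iff.2 (hlog.2 h), hφ.integral_exp (hlog.2 h)⟩
  · rw [hφ.intervalIntegrable_exp_iff, hlog]
    exact h.not_gt

/-- Properties of the dyadic extremal function `φ₀`, with `φ₀(t) = (k−1)·a` on
`(2^{−(k+1)}, 2^{−k}]` where `a = ε/√2`. -/
theorem stmt4 (ε : ℝ) (hε : 0 < ε) (a : ℝ) (ha : a = ε / Real.sqrt 2)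
    (φ₀ : ℝ → ℝ)
    (hφ₀ : ∀ k : ℕ, ∀ t ∈ Set.Ioc ((2:ℝ) ^ (-(k:ℤ) - 1)) ((2:ℝ) ^ (-(k:ℤ))),
      φ₀ t = ((k : ℝ) - 1) * a) :
    BMOd ε φ₀ ∧
    IsLUB {v : ℝ | ∃ n k : ℕ, k < 2 ^ n ∧
        v = avg (fun t => (φ₀ t) ^ 2) ((k : ℝ) / 2 ^ n) (((k : ℝ) + 1) / 2 ^ n)
            - (avg φ₀ ((k : ℝ) / 2 ^ n) (((k : ℝ) + 1) / 2 ^ n)) ^ 2} (ε ^ 2) ∧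
    (∫ t in (0:ℝ)..1, φ₀ t) = 0 ∧
    (∫ t in (0:ℝ)..1, (φ₀ t) ^ 2) = ε ^ 2 ∧
    (ε < Real.sqrt 2 * Real.log 2 →
      IntervalIntegrable (fun t => Real.exp (φ₀ t)) volume 0 1 ∧
      (∫ t in (0:ℝ)..1, Real.exp (φ₀ t)) =
        Real.exp (-ε / Real.sqrt 2) / (2 - Real.exp (ε / Real.sqrt 2))) ∧
    (Real.sqrt 2 * Real.log 2 ≤ ε →
      ¬ IntervalIntegrable (fun t => Real.exp (φ₀ t)) volume 0 1) :=
  stmt4_general ε a ha φ₀ hφ₀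
end

section
/- Let 0 < a ≤ 1, b ∈ ℝ, γ ∈ ℝ, and define φ on (0,1] by φ(t) = γ·log(a/t) + b for 0 < t ≤ a and φ(t) = b for a < t ≤ 1. Then φ ∈ BMO_{|γ|}((0,1]), ∫₀¹ φ = γa + b, and ∫₀¹ φ² = 2γ²a + 2γab + b². -/
open MeasureTheory Real

/-!
On `(0, 1]` we have `φ = γ * log⁺ (a / t) + b`. Mean oscillation is multiplied by `γ ^ 2` under
`f ↦ γ * f + b`, so it suffices to bound the oscillation of `log⁺ (a / t)` by `1`. On subintervals
`[c, d]` of `[0, a]` this is the oscillation of `log`, which after clearing denominators is exactly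
`(d - c) ^ 2 - c * d * (log d - log c) ^ 2`; on subintervals of `[a, 1]` it vanishes; and for
`c < a < d` the zero tail `(a, d]` adds
`(d - a) * ∫ t in c..a, log⁺ (a / t) ^ 2 ≤ 2 * (d - a) * (a - c)` to the oscillation over `[c, a]`.
-/

open Set
open scoped Interval
open intervalIntegral (intervalIntegrable_log' intervalIntegrable_deriv_of_nonneg
  integral_eq_sub_of_hasDerivAt_of_le)

/-- `(d - c) ^ 2` times the mean oscillation `⟨f²⟩_J - ⟨f⟩_J²` over `J = [c, d]`, free of
denominators. -/
noncomputable def scaledOsc (f : ℝ → ℝ) (c d : ℝ) : ℝ :=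
  (d - c) * (∫ t in c..d, f t ^ 2) - (∫ t in c..d, f t) ^ 2

theorem avg_sq_sub_sq_avg_eq (f : ℝ → ℝ) {c d : ℝ} (hcd : c ≠ d) :
    avg (fun t => f t ^ 2) c d - avg f c d ^ 2 = scaledOsc f c d / (d - c) ^ 2 := by
  have : d - c ≠ 0 := sub_ne_zero.2 hcd.symm
  unfold avg scaledOsc
  field_simp

section Affine

variable {f g : ℝ → ℝ} {γ b c d : ℝ}

theorem intervalIntegrable_of_eqOn_affine (hf : IntervalIntegrable f volume c d)
    (hg : EqOn g (fun t => γ * f t + b) (Ι c d)) : IntervalIntegrable g volume c d :=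
  (intervalIntegrable_congr hg).2 ((hf.const_mul γ).add intervalIntegrable_const)

theorem intervalIntegrable_sq_of_eqOn_affine (hf : IntervalIntegrable f volume c d)
    (hf2 : IntervalIntegrable (fun t => f t ^ 2) volume c d)
    (hg : EqOn g (fun t => γ * f t + b) (Ι c d)) :
    IntervalIntegrable (fun t => g t ^ 2) volume c d :=
  (intervalIntegrable_congr fun t ht => by simp only [hg ht]; ring).2
    (((hf2.const_mul (γ ^ 2)).add (hf.const_mul (2 * γ * b))).add
      (intervalIntegrable_const (c := b ^ 2)))

theorem integral_eq_of_eqOn_affine (hf : IntervalIntegrable f volume c d)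
    (hg : EqOn g (fun t => γ * f t + b) (Ι c d)) :
    ∫ t in c..d, g t = γ * (∫ t in c..d, f t) + b * (d - c) := by
  rw [intervalIntegral.integral_congr_ae (ae_of_all _ hg),
    intervalIntegral.integral_add (hf.const_mul γ) intervalIntegrable_const,
    intervalIntegral.integral_const_mul, intervalIntegral.integral_const, smul_eq_mul,
    mul_comm (d - c)]

theorem integral_sq_eq_of_eqOn_affine (hf : IntervalIntegrable f volume c d)
    (hf2 : IntervalIntegrable (fun t => f t ^ 2) volume c d)
    (hg : EqOn g (fun t => γ * f t + b) (Ι c d)) :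
    ∫ t in c..d, g t ^ 2 =
      γ ^ 2 * (∫ t in c..d, f t ^ 2) + 2 * γ * b * (∫ t in c..d, f t) + b ^ 2 * (d - c) := by
  have hg2 : EqOn (fun t => g t ^ 2)
      (fun t => γ ^ 2 * f t ^ 2 + 2 * γ * b * f t + b ^ 2) (Ι c d) := fun t ht => by
    simp only [hg ht]; ring
  rw [intervalIntegral.integral_congr_ae (ae_of_all _ hg2),
    intervalIntegral.integral_add ((hf2.const_mul _).add (hf.const_mul _)) intervalIntegrable_const,
    intervalIntegral.integral_add (hf2.const_mul _) (hf.const_mul _),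
    intervalIntegral.integral_const_mul, intervalIntegral.integral_const_mul,
    intervalIntegral.integral_const, smul_eq_mul, mul_comm (d - c)]

theorem scaledOsc_eq_of_eqOn_affine (hf : IntervalIntegrable f volume c d)
    (hf2 : IntervalIntegrable (fun t => f t ^ 2) volume c d)
    (hg : EqOn g (fun t => γ * f t + b) (Ι c d)) :
    scaledOsc g c d = γ ^ 2 * scaledOsc f c d := by
  rw [scaledOsc, scaledOsc, integral_eq_of_eqOn_affine hf hg,
    integral_sq_eq_of_eqOn_affine hf hf2 hg]
  ring

end Affine

section ZeroTail

variable {f : ℝ → ℝ} {c m d : ℝ}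

theorem integral_eq_of_eqOn_zero (hf : IntervalIntegrable f volume c m)
    (hzero : EqOn f 0 (Ι m d)) : ∫ t in c..d, f t = ∫ t in c..m, f t := by
  have hf_tail : IntervalIntegrable f volume m d :=
    (intervalIntegrable_congr hzero).2 intervalIntegrable_const
  rw [← intervalIntegral.integral_add_adjacent_intervals hf hf_tail,
    intervalIntegral.integral_zero_ae (ae_of_all _ hzero), add_zero]

theorem scaledOsc_eq_of_eqOn_zero (hf : IntervalIntegrable f volume c m)
    (hf2 : IntervalIntegrable (fun t => f t ^ 2) volume c m) (hzero : EqOn f 0 (Ι m d)) :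
    scaledOsc f c d = scaledOsc f c m + (d - m) * ∫ t in c..m, f t ^ 2 := by
  have hzero2 : EqOn (fun t => f t ^ 2) 0 (Ι m d) := fun t ht => by simp [hzero ht]
  rw [scaledOsc, scaledOsc, integral_eq_of_eqOn_zero hf hzero,
    integral_eq_of_eqOn_zero hf2 hzero2]
  ring

end ZeroTail

section Log

noncomputable def logSqPrimitive (t : ℝ) : ℝ := t * log t ^ 2 - 2 * (t * log t) + 2 * t

theorem hasDerivAt_logSqPrimitive {t : ℝ} (ht : t ≠ 0) :
    HasDerivAt logSqPrimitive (log t ^ 2) t := by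
  have hlog_sq : HasDerivAt (fun x => log x ^ 2) (2 * log t * t⁻¹) t := by
    simpa using (hasDerivAt_log ht).fun_pow 2
  have h := (((hasDerivAt_id' t).mul hlog_sq).sub ((hasDerivAt_mul_log ht).const_mul 2)).add
    ((hasDerivAt_id' t).const_mul 2)
  exact h.congr_deriv (by field_simp; ring)

theorem continuousOn_logSqPrimitive : ContinuousOn logSqPrimitive (Ici 0) := by
  have hsqrt : Continuous fun t : ℝ => (2 * (√t * log √t)) ^ 2 :=
    ((continuous_mul_log.comp continuous_sqrt).const_mul 2).pow 2
  have hsq : ContinuousOn (fun t : ℝ => t * log t ^ 2) (Ici 0) :=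
    hsqrt.continuousOn.congr fun t ht => by
      dsimp only
      rw [log_sqrt ht]
      nth_rw 1 [← sq_sqrt ht]
      ring
  exact (hsq.sub (continuous_mul_log.const_mul 2).continuousOn).add
    (continuous_id.const_mul 2).continuousOn

theorem intervalIntegrable_log_sq {c d : ℝ} :
    IntervalIntegrable (fun t => log t ^ 2) volume c d := by
  refine intervalIntegrable_of_even (fun t => by rw [log_neg_eq_log]) fun x hx => ?_
  refine intervalIntegrable_deriv_of_nonneg (continuousOn_logSqPrimitive.mono ?_)
    (fun t ht => hasDerivAt_logSqPrimitive ?_) fun t _ => sq_nonneg _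
  · rw [uIcc_of_le hx.le]; exact Icc_subset_Ici_self
  · rw [min_eq_left hx.le] at ht; exact ht.1.ne'

theorem integral_log_sq {c d : ℝ} (hc : 0 ≤ c) (hcd : c ≤ d) :
    ∫ t in c..d, log t ^ 2 = logSqPrimitive d - logSqPrimitive c :=
  integral_eq_sub_of_hasDerivAt_of_le hcd
    (continuousOn_logSqPrimitive.mono fun _ ht => hc.trans ht.1)
    (fun _ ht => hasDerivAt_logSqPrimitive (hc.trans_lt ht.1).ne') intervalIntegrable_log_sq

theorem scaledOsc_log {c d : ℝ} (hc : 0 ≤ c) (hcd : c ≤ d) :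
    scaledOsc log c d = (d - c) ^ 2 - c * d * (log d - log c) ^ 2 := by
  rw [scaledOsc, integral_log_sq hc hcd, integral_log, logSqPrimitive, logSqPrimitive]
  ring

end Log

section PosLog

variable {a c d : ℝ}

theorem posLog_div_of_le {t : ℝ} (ht : 0 < t) (hta : t ≤ a) : log⁺ (a / t) = log a - log t := by
  have ha : 0 < a := ht.trans_le hta
  rw [posLog_eq_log (by rw [abs_of_pos (div_pos ha ht)]; exact (one_le_div ht).2 hta),
    log_div ha.ne' ht.ne']

theorem posLog_div_of_ge {t : ℝ} (ha : 0 ≤ a) (hat : a ≤ t) : log⁺ (a / t) = 0 := by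
  rw [posLog_eq_zero_iff, abs_of_nonneg (div_nonneg ha (ha.trans hat))]
  exact div_le_one_of_le₀ hat (ha.trans hat)

theorem abs_posLog_div_le (a t : ℝ) : |log⁺ (a / t)| ≤ |log a - log t| := by
  rcases eq_or_ne a 0 with rfl | ha
  · simp
  rcases eq_or_ne t 0 with rfl | ht
  · simp
  rw [abs_of_nonneg posLog_nonneg, ← log_div ha ht, posLog_apply]
  exact max_le (abs_nonneg _) (le_abs_self _)

theorem intervalIntegrable_posLog_div :
    IntervalIntegrable (fun t => log⁺ (a / t)) volume c d := by
  refine (intervalIntegrable_const.sub intervalIntegrable_log').mono_fun ?_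
    (ae_of_all _ fun t => by simpa only [Real.norm_eq_abs] using abs_posLog_div_le a t)
  exact (continuous_posLog.measurable.comp
    (measurable_const.div measurable_id)).aestronglyMeasurable

theorem intervalIntegrable_posLog_div_sq :
    IntervalIntegrable (fun t => log⁺ (a / t) ^ 2) volume c d := by
  have hdom : IntervalIntegrable (fun t => (log a - log t) ^ 2) volume c d :=
    (intervalIntegrable_congr fun t _ => by ring).2 <|
      ((intervalIntegrable_const (c := log a ^ 2)).sub
        (intervalIntegrable_log'.const_mul (2 * log a))).add
        intervalIntegrable_log_sq
  refine hdom.mono_fun ?_ (ae_of_all _ fun t => ?_)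
  · exact ((continuous_posLog.measurable.comp
      (measurable_const.div measurable_id)).pow_const 2).aestronglyMeasurable
  · simp only [norm_pow, Real.norm_eq_abs]
    exact pow_le_pow_left₀ (abs_nonneg _) (abs_posLog_div_le a t) 2

theorem eqOn_posLog_div (hc : 0 ≤ c) (hcd : c ≤ d) (hda : d ≤ a) :
    EqOn (fun t => log⁺ (a / t)) (fun t => -1 * log t + log a) (Ι c d) := fun t ht => by
  rw [uIoc_of_le hcd] at ht
  dsimp only
  rw [posLog_div_of_le (hc.trans_lt ht.1) (ht.2.trans hda)]
  ring

theorem eqOn_posLog_div_zero (ha : 0 ≤ a) (hac : a ≤ c) (hcd : c ≤ d) :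
    EqOn (fun t => log⁺ (a / t)) 0 (Ι c d) := fun t ht => by
  rw [uIoc_of_le hcd] at ht
  exact posLog_div_of_ge ha (hac.trans ht.1.le)

theorem integral_posLog_div (hc : 0 ≤ c) (hca : c ≤ a) :
    ∫ t in c..a, log⁺ (a / t) = a - c - c * (log a - log c) := by
  rw [integral_eq_of_eqOn_affine intervalIntegrable_log' (eqOn_posLog_div hc hca le_rfl),
    integral_log]
  ring

theorem integral_posLog_div_sq (hc : 0 ≤ c) (hca : c ≤ a) :
    ∫ t in c..a, log⁺ (a / t) ^ 2 =
      2 * (a - c) - c * (log a - log c) ^ 2 - 2 * c * (log a - log c) := by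
  rw [integral_sq_eq_of_eqOn_affine intervalIntegrable_log' intervalIntegrable_log_sq
    (eqOn_posLog_div hc hca le_rfl), integral_log, integral_log_sq hc hca, logSqPrimitive,
    logSqPrimitive]
  ring

theorem scaledOsc_posLog_div_of_le (hc : 0 ≤ c) (hcd : c ≤ d) (hda : d ≤ a) :
    scaledOsc (fun t => log⁺ (a / t)) c d = (d - c) ^ 2 - c * d * (log d - log c) ^ 2 := by
  rw [scaledOsc_eq_of_eqOn_affine intervalIntegrable_log' intervalIntegrable_log_sq
    (eqOn_posLog_div hc hcd hda), scaledOsc_log hc hcd]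
  ring

theorem integral_posLog_div_sq_le (hc : 0 ≤ c) (hca : c ≤ a) :
    ∫ t in c..a, log⁺ (a / t) ^ 2 ≤ 2 * (a - c) := by
  have hlog : 0 ≤ c * (log a - log c) := by
    rcases hc.eq_or_lt with rfl | hc
    · simp
    · exact mul_nonneg hc.le (sub_nonneg.2 (log_le_log hc hca))
  rw [integral_posLog_div_sq hc hca]
  nlinarith [mul_nonneg hc (sq_nonneg (log a - log c))]

theorem scaledOsc_posLog_div_le (ha : 0 ≤ a) (hc : 0 ≤ c) (hcd : c ≤ d) :
    scaledOsc (fun t => log⁺ (a / t)) c d ≤ (d - c) ^ 2 := by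
  rcases le_total d a with hda | had
  · rw [scaledOsc_posLog_div_of_le hc hcd hda]
    nlinarith [mul_nonneg (mul_nonneg hc (hc.trans hcd)) (sq_nonneg (log d - log c))]
  rcases le_total a c with hac | hca
  · rw [scaledOsc_eq_of_eqOn_zero intervalIntegrable_posLog_div intervalIntegrable_posLog_div_sq
      (eqOn_posLog_div_zero ha hac hcd)]
    simp [scaledOsc, sq_nonneg]
  · rw [scaledOsc_eq_of_eqOn_zero intervalIntegrable_posLog_div intervalIntegrable_posLog_div_sq
      (eqOn_posLog_div_zero ha le_rfl had), scaledOsc_posLog_div_of_le hc hca le_rfl]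
    nlinarith [integral_posLog_div_sq_le hc hca, mul_nonneg (mul_nonneg hc ha)
      (sq_nonneg (log a - log c)), mul_nonneg (sub_nonneg.2 hca) (sub_nonneg.2 had)]

end PosLog

/-- The logarithmic step function `φ_{a,b,γ}` lies in `BMO_{|γ|}((0,1])` and has
the stated first and second averages. -/
theorem stmt5 (a b γ : ℝ) (ha0 : 0 < a) (ha1 : a ≤ 1)
    (φ : ℝ → ℝ)
    (hφ1 : ∀ t ∈ Set.Ioc (0 : ℝ) a, φ t = γ * Real.log (a / t) + b)
    (hφ2 : ∀ t ∈ Set.Ioc a 1, φ t = b) :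
    BMOe |γ| 0 1 φ ∧
    (∫ t in (0:ℝ)..1, φ t) = γ * a + b ∧
    (∫ t in (0:ℝ)..1, (φ t) ^ 2) = 2 * γ ^ 2 * a + 2 * γ * a * b + b ^ 2 := by
  have hφ : EqOn φ (fun t => γ * log⁺ (a / t) + b) (Ι 0 1) := fun t ht => by
    rw [uIoc_of_le zero_le_one] at ht
    dsimp only
    rcases le_or_gt t a with hta | hat
    · rw [hφ1 t ⟨ht.1, hta⟩, posLog_div_of_le ht.1 hta, log_div ha0.ne' ht.1.ne']
    · rw [hφ2 t ⟨hat, ht.2⟩, posLog_div_of_ge ha0.le hat.le, mul_zero, zero_add]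
  have hzero : EqOn (fun t => log⁺ (a / t)) 0 (Ι a 1) := eqOn_posLog_div_zero ha0.le le_rfl ha1
  have hintegral : ∫ t in (0:ℝ)..1, log⁺ (a / t) = a := by
    rw [integral_eq_of_eqOn_zero intervalIntegrable_posLog_div hzero,
      integral_posLog_div le_rfl ha0.le]
    ring
  have hintegral_sq : ∫ t in (0:ℝ)..1, log⁺ (a / t) ^ 2 = 2 * a := by
    rw [integral_eq_of_eqOn_zero intervalIntegrable_posLog_div_sq
      (fun t ht => by simp [show log⁺ (a / t) = 0 from hzero ht]),
      integral_posLog_div_sq le_rfl ha0.le]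
    ring
  refine ⟨⟨intervalIntegrable_of_eqOn_affine intervalIntegrable_posLog_div hφ,
    intervalIntegrable_sq_of_eqOn_affine intervalIntegrable_posLog_div
      intervalIntegrable_posLog_div_sq hφ, fun c d hc hcd hd => ?_⟩, ?_, ?_⟩
  · have hφ_cd : EqOn φ (fun t => γ * log⁺ (a / t) + b) (Ι c d) := hφ.mono <| by
      rw [uIoc_of_le hcd.le, uIoc_of_le zero_le_one]
      exact Ioc_subset_Ioc hc hd
    rw [avg_sq_sub_sq_avg_eq φ hcd.ne, scaledOsc_eq_of_eqOn_affine intervalIntegrable_posLog_div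
      intervalIntegrable_posLog_div_sq hφ_cd, sq_abs, div_le_iff₀ (pow_pos (sub_pos.2 hcd) 2)]
    exact mul_le_mul_of_nonneg_left (scaledOsc_posLog_div_le ha0.le hc hcd.le) (sq_nonneg γ)
  · rw [integral_eq_of_eqOn_affine intervalIntegrable_posLog_div hφ, hintegral]
    ring
  · rw [integral_sq_eq_of_eqOn_affine intervalIntegrable_posLog_div
      intervalIntegrable_posLog_div_sq hφ, hintegral, hintegral_sq]
    ring
end
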